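/- Let n ≥ 4 and k an integer. There exists an n×2 integer matrix P with Pᵀ P = k·I₂ if and only if k ≥ 0. Equivalently, there exist two orthogonal integer vectors in ℤⁿ each of squared length k if and only if k is nonnegative. (This is the algebraic content of: there is a degree k map f: (ℂP²)^{♯n} → ℂP²♯ℂP², n ≥ 4, if and only if k is a nonnegative integer.) -/

import Mathlib

/-!
The diagonal entry `k = ∑ⱼ P j 0 ^ 2` of `Pᵀ * P` forces `0 ≤ k`. Conversely, write
`k = a² + b² + c² + d²` (Lagrange); the quaternion `q = a + bi + cj + dk` and `i q` are orthogonal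
vectors of `ℤ⁴` of squared length `k`, and padding them with zeros gives vectors of `ℤⁿ` for `n ≥ 4`.
-/

open Matrix

namespace Matrix

variable {R : Type*} {m n p : Type*}

theorem transpose_mul_self_apply_self_nonneg [Fintype m] [Ring R] [LinearOrder R]
    [IsStrictOrderedRing R] (P : Matrix m n R) (i : n) : 0 ≤ (Pᵀ * P) i i :=
  Finset.sum_nonneg fun j _ => mul_self_nonneg (P j i)

theorem transpose_mul_self_fromRows [Fintype m] [Fintype n] [Semiring R]
    (A : Matrix m p R) (B : Matrix n p R) :
    (fromRows A B)ᵀ * fromRows A B = Aᵀ * A + Bᵀ * B := by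
  rw [transpose_fromRows, fromCols_mul_fromRows]

theorem transpose_mul_self_submatrix_equiv [Fintype m] [Fintype n] [AddCommMonoid R] [Mul R]
    (P : Matrix m p R) (e : n ≃ m) :
    (P.submatrix e id)ᵀ * P.submatrix e id = Pᵀ * P := by
  rw [transpose_submatrix, submatrix_mul_equiv, submatrix_id_id]

theorem exists_transpose_mul_self_eq_of_le [Semiring R] {k l : ℕ} (hkl : k ≤ l)
    (Q : Matrix (Fin k) p R) : ∃ P : Matrix (Fin l) p R, Pᵀ * P = Qᵀ * Q := by
  let e : Fin l ≃ Fin k ⊕ Fin (l - k) :=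
    (finCongr (Nat.add_sub_of_le hkl).symm).trans finSumFinEquiv.symm
  refine ⟨(fromRows Q (0 : Matrix (Fin (l - k)) p R)).submatrix e id, ?_⟩
  rw [transpose_mul_self_submatrix_equiv, transpose_mul_self_fromRows, Matrix.mul_zero, add_zero]

theorem transpose_mul_self_quaternion_columns [CommRing R] (a b c d : R) :
    (!![a, -b; b, a; c, -d; d, c])ᵀ * !![a, -b; b, a; c, -d; d, c] =
      (a ^ 2 + b ^ 2 + c ^ 2 + d ^ 2) • (1 : Matrix (Fin 2) (Fin 2) R) := by
  ext i j
  fin_cases i <;> fin_cases j <;> simp [mul_apply, Fin.sum_univ_four] <;> ring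

end Matrix

theorem exists_fin_four_transpose_mul_self_eq_smul_one {k : ℤ} (hk : 0 ≤ k) :
    ∃ Q : Matrix (Fin 4) (Fin 2) ℤ, Qᵀ * Q = k • (1 : Matrix (Fin 2) (Fin 2) ℤ) := by
  obtain ⟨a, b, c, d, habcd⟩ := Nat.sum_four_squares k.toNat
  refine ⟨_, (transpose_mul_self_quaternion_columns (a : ℤ) b c d).trans ?_⟩
  rw [← Int.toNat_of_nonneg hk, ← habcd]
  norm_cast

theorem degree_cp2_n_to_two {n : ℕ} (hn : 4 ≤ n) (k : ℤ) :
    (∃ P : Matrix (Fin n) (Fin 2) ℤ, Pᵀ * P = k • (1 : Matrix (Fin 2) (Fin 2) ℤ)) ↔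
      0 ≤ k := by
  constructor
  · rintro ⟨P, hP⟩
    simpa [hP] using P.transpose_mul_self_apply_self_nonneg 0
  · intro hk
    obtain ⟨Q, hQ⟩ := exists_fin_four_transpose_mul_self_eq_smul_one hk
    obtain ⟨P, hP⟩ := exists_transpose_mul_self_eq_of_le hn Q
    exact ⟨P, hP.trans hQ⟩
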